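/- Let A ∈ ℝ^{m×n} have rank k with distinct positive singular values σ₁ > σ₂ > … > σ_k > 0 and SVD A = ∑_{i=1}^k σ_i ũ_i ṽ_iᵀ, set r = min(m,n), and let μ_n be the uniform probability measure on the closed unit ball of ℝ^n. Then (U,V) ∈ ℝ^{m×r} × ℝ^{n×r} is a global minimizer of F(U,V) = ∫ (1/r) ∑_{b=1}^r ‖U_{:b}V_{:b}ᵀ x − A x‖² dμ_n(x) if and only if U_{:b}V_{:b}ᵀ = ∑_{i=1}^{min(b,k)} σ_i ũ_i ṽ_iᵀ for every b ∈ {1,…,r}. That is, with uniform-ball data the data-dependent nested low-rank objective recovers the truncated SVDs of A of all ranks, i.e., the best rank-b approximation of A for every b. -/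

import Mathlib

open scoped RealInnerProductSpace ENNReal


open Matrix MeasureTheory

noncomputable section

/-- Squared Euclidean norm of a vector in `ℝ^m`. -/
def sqNorm {m : ℕ} (v : Fin m → ℝ) : ℝ := ∑ i, v i ^ 2

/-- `lrProd b U V = U_{:b} V_{:b}ᵀ`, the product of the submatrices consisting of the
first `b` columns of `U` and of `V`. -/
def lrProd {m n r : ℕ} (b : ℕ) (U : Matrix (Fin m) (Fin r) ℝ)
    (V : Matrix (Fin n) (Fin r) ℝ) : Matrix (Fin m) (Fin n) ℝ :=
  Matrix.of fun i j => ∑ t : Fin r, if (t : ℕ) < b then U i t * V j t else 0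

/-- The closed Euclidean unit ball `{x ∈ ℝ^n : ‖x‖ ≤ 1}`. -/
def euclBall (n : ℕ) : Set (Fin n → ℝ) := {x | ∑ i, x i ^ 2 ≤ 1}

/-- The uniform probability measure `μ_n` on the closed Euclidean unit ball,
i.e. normalized Lebesgue measure restricted to the ball. -/
def unifBall (n : ℕ) : Measure (Fin n → ℝ) :=
  (volume (euclBall n))⁻¹ • volume.restrict (euclBall n)

/-- `F(U,V) = ∫ (1/r) ∑_{b=1}^r ‖U_{:b}V_{:b}ᵀ x − A x‖² dμ_n(x)` with `r = min m n`.
(The index `b : Fin (min m n)` stands for the 1-indexed truncation level `b+1`.) -/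
def nestedDataObj {m n : ℕ} (A : Matrix (Fin m) (Fin n) ℝ)
    (U : Matrix (Fin m) (Fin (min m n)) ℝ) (V : Matrix (Fin n) (Fin (min m n)) ℝ) : ℝ :=
  ∫ x, (1 / (min m n : ℝ)) * ∑ b : Fin (min m n),
    sqNorm ((lrProd ((b : ℕ) + 1) U V).mulVec x - A.mulVec x) ∂(unifBall n)

namespace Stmt7Aux

def toE {q : ℕ} (x : Fin q → ℝ) : EuclideanSpace ℝ (Fin q) := (WithLp.equiv 2 _).symm x

lemma toE_apply {q : ℕ} (x : Fin q → ℝ) (i : Fin q) : toE x i = x i := rfl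

lemma inner_toE {q : ℕ} (x y : Fin q → ℝ) : ⟪toE x, toE y⟫ = ∑ i, x i * y i := by
  simp [toE, PiLp.inner_apply, RCLike.inner_apply]
  exact Finset.sum_congr rfl fun i _ => mul_comm _ _

lemma sum_dite_le {r k : ℕ} (h : k ≤ r) (g : Fin k → ℝ) :
    (∑ t : Fin r, if ht : (t : ℕ) < k then g ⟨t, ht⟩ else 0) = ∑ i, g i := by
  set G : ℕ → ℝ := fun t => if ht : t < k then g ⟨t, ht⟩ else 0 with hG
  have h1 : (∑ t : Fin r, if ht : (t : ℕ) < k then g ⟨t, ht⟩ else 0) = ∑ t ∈ Finset.range r, G t := by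
    rw [← Fin.sum_univ_eq_sum_range]
  have h2 : (∑ i, g i) = ∑ t ∈ Finset.range k, G t := by
    rw [← Fin.sum_univ_eq_sum_range]
    refine Finset.sum_congr rfl fun i _ => ?_
    simp [hG]
  rw [h1, h2]
  refine (Finset.sum_subset (Finset.range_subset_range.mpr h) fun t _ ht => ?_).symm
  simp only [Finset.mem_range, not_lt] at ht
  simp [hG, Nat.not_lt.mpr ht]

lemma sum_support_lt {n k : ℕ} (h : k ≤ n) (g : Fin n → ℝ)
    (hg : ∀ l : Fin n, ¬ ((l : ℕ) < k) → g l = 0) :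
    ∑ l, g l = ∑ i : Fin k, g (Fin.castLE h i) := by
  set G : ℕ → ℝ := fun t => if ht : t < n then g ⟨t, ht⟩ else 0 with hG
  have h1 : (∑ l, g l) = ∑ t ∈ Finset.range n, G t := by
    rw [← Fin.sum_univ_eq_sum_range]
    refine Finset.sum_congr rfl fun i _ => ?_
    simp [hG]
  have h2 : (∑ i : Fin k, g (Fin.castLE h i)) = ∑ t ∈ Finset.range k, G t := by
    rw [← Fin.sum_univ_eq_sum_range]
    refine Finset.sum_congr rfl fun i _ => ?_
    have hik : (i : ℕ) < n := lt_of_lt_of_le i.2 h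
    simp only [hG, hik, dif_pos]
    rfl
  rw [h1, h2]
  refine (Finset.sum_subset (Finset.range_subset_range.mpr h) fun t htn htk => ?_).symm
  simp only [Finset.mem_range] at htn htk
  simp only [hG, htn, dif_pos]
  exact hg ⟨t, htn⟩ htk

lemma sum_ite_lt_count {k s : ℕ} (h : s ≤ k) (c : ℝ) :
    (∑ i : Fin k, if (i : ℕ) < s then c else 0) = s * c := by
  have h1 : (∑ i : Fin k, if (i : ℕ) < s then c else 0)
      = ∑ t ∈ Finset.range k, (if t < s then c else 0) := by
    rw [← Fin.sum_univ_eq_sum_range]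
  rw [h1, ← Finset.sum_filter]
  have : (Finset.range k).filter (· < s) = Finset.range s := by
    ext t; simp only [Finset.mem_filter, Finset.mem_range]; omega
  rw [this, Finset.sum_const, Finset.card_range, nsmul_eq_mul]

lemma wlem {k : ℕ} (s : ℕ) (σ : Fin k → ℝ) (hσpos : ∀ i, 0 < σ i)
    (hσstrict : ∀ i j : Fin k, i < j → σ j < σ i)
    (w : Fin k → ℝ) (hw0 : ∀ i, 0 ≤ w i) (hw1 : ∀ i, w i ≤ 1)
    (hsum : ∑ i, w i ≤ s) :
    (∑ i : Fin k, if s ≤ (i : ℕ) then σ i ^ 2 else 0) ≤ ∑ i, σ i ^ 2 * (1 - w i) ∧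
    ((∑ i, σ i ^ 2 * (1 - w i)) = (∑ i : Fin k, if s ≤ (i : ℕ) then σ i ^ 2 else 0) →
      ∀ i, w i = if (i : ℕ) < s then 1 else 0) := by
  by_cases hsk : k ≤ s
  · have htail : (∑ i : Fin k, if s ≤ (i : ℕ) then σ i ^ 2 else 0) = 0 := by
      refine Finset.sum_eq_zero fun i _ => ?_
      have : ¬ s ≤ (i : ℕ) := by omega
      simp [this]
    have hterm : ∀ i : Fin k, 0 ≤ σ i ^ 2 * (1 - w i) := fun i =>
      mul_nonneg (sq_nonneg _) (by linarith [hw1 i])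
    constructor
    · rw [htail]; exact Finset.sum_nonneg fun i _ => hterm i
    · intro heq i
      rw [htail] at heq
      have hz := (Finset.sum_eq_zero_iff_of_nonneg fun i _ => hterm i).mp heq i (Finset.mem_univ i)
      have hσ2 : σ i ^ 2 ≠ 0 := ne_of_gt (pow_pos (hσpos i) 2)
      have : 1 - w i = 0 := by
        rcases mul_eq_zero.mp hz with h | h
        · exact absurd h hσ2
        · exact h
      have hi : (i : ℕ) < s := by omega
      simp [hi]; linarith
  · push_neg at hsk
    set ss : Fin k := ⟨s, hsk⟩ with hss
    set τ : ℝ := σ ss ^ 2 with hτ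
    have hτpos : 0 < τ := pow_pos (hσpos ss) 2
    set δ : Fin k → ℝ := fun i =>
      if (i : ℕ) < s then (σ i ^ 2 - τ) * (1 - w i) else (τ - σ i ^ 2) * w i with hδ
    have hδnn : ∀ i, 0 ≤ δ i := by
      intro i
      simp only [hδ]
      by_cases hi : (i : ℕ) < s
      · have hlt : i < ss := by simpa [hss, Fin.lt_def] using hi
        have : σ ss < σ i := hσstrict i ss hlt
        have h2 : τ < σ i ^ 2 := by
          apply pow_lt_pow_left₀ this (le_of_lt (hσpos ss))
          norm_num
        simp only [hi, if_true]
        exact mul_nonneg (by linarith) (by linarith [hw1 i])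
      · have hle : σ i ^ 2 ≤ τ := by
          rcases eq_or_lt_of_le (Nat.le_of_not_lt hi) with h | h
          · have : ss = i := Fin.ext (by simpa [hss] using h)
            rw [← this]
          · have hlt : ss < i := by simpa [hss, Fin.lt_def] using h
            have : σ i < σ ss := hσstrict ss i hlt
            exact le_of_lt (by apply pow_lt_pow_left₀ this (le_of_lt (hσpos i)); norm_num)
        simp only [hi, if_false]
        exact mul_nonneg (by linarith) (hw0 i)
    have key : ∀ i : Fin k, σ i ^ 2 * (1 - w i) - (if s ≤ (i : ℕ) then σ i ^ 2 else 0)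
        = δ i + (if (i : ℕ) < s then τ else 0) - τ * w i := by
      intro i
      by_cases hi : (i : ℕ) < s
      · have : ¬ s ≤ (i : ℕ) := by omega
        simp only [hδ, hi, this, if_true, if_false]; ring
      · have : s ≤ (i : ℕ) := by omega
        simp only [hδ, hi, this, if_true, if_false]; ring
    have hD : (∑ i, σ i ^ 2 * (1 - w i)) - (∑ i : Fin k, if s ≤ (i : ℕ) then σ i ^ 2 else 0)
        = (∑ i, δ i) + τ * ((s : ℝ) - ∑ i, w i) := by
      rw [← Finset.sum_sub_distrib]
      calc (∑ i, (σ i ^ 2 * (1 - w i) - if s ≤ (i : ℕ) then σ i ^ 2 else 0))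
          = ∑ i, (δ i + (if (i : ℕ) < s then τ else 0) - τ * w i) :=
            Finset.sum_congr rfl fun i _ => key i
        _ = (∑ i, δ i) + (∑ i : Fin k, if (i : ℕ) < s then τ else 0) - τ * ∑ i, w i := by
            rw [Finset.sum_sub_distrib, Finset.sum_add_distrib, Finset.mul_sum]
        _ = (∑ i, δ i) + τ * ((s : ℝ) - ∑ i, w i) := by
            rw [sum_ite_lt_count (le_of_lt hsk)]; ring
    have hδsum : 0 ≤ ∑ i, δ i := Finset.sum_nonneg fun i _ => hδnn i
    have hrest : 0 ≤ τ * ((s : ℝ) - ∑ i, w i) := mul_nonneg (le_of_lt hτpos) (by linarith)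
    constructor
    · nlinarith [hD]
    · intro heq
      have hzero : (∑ i, δ i) + τ * ((s : ℝ) - ∑ i, w i) = 0 := by rw [← hD, heq]; ring
      have hδ0 : ∑ i, δ i = 0 := by linarith
      have hr0 : τ * ((s : ℝ) - ∑ i, w i) = 0 := by linarith
      have hwsum : (∑ i, w i) = s := by
        have : (s : ℝ) - ∑ i, w i = 0 := by
          rcases mul_eq_zero.mp hr0 with h | h
          · exact absurd h (ne_of_gt hτpos)
          · exact h
        linarith
      have hδi : ∀ i : Fin k, δ i = 0 := fun i =>
        (Finset.sum_eq_zero_iff_of_nonneg fun i _ => hδnn i).mp hδ0 i (Finset.mem_univ i)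
      -- w i = 1 for i < s, w i = 0 for s < i
      have hw_lt : ∀ i : Fin k, (i : ℕ) < s → w i = 1 := by
        intro i hi
        have := hδi i
        simp only [hδ, hi, if_true] at this
        have hlt : i < ss := by simpa [hss, Fin.lt_def] using hi
        have h2 : τ < σ i ^ 2 := by
          apply pow_lt_pow_left₀ (hσstrict i ss hlt) (le_of_lt (hσpos ss)); norm_num
        rcases mul_eq_zero.mp this with h | h
        · linarith
        · linarith
      have hw_gt : ∀ i : Fin k, s < (i : ℕ) → w i = 0 := by
        intro i hi
        have := hδi i
        have hns : ¬ ((i : ℕ) < s) := by omega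
        simp only [hδ, hns, if_false] at this
        have hlt : ss < i := by simpa [hss, Fin.lt_def] using hi
        have h2 : σ i ^ 2 < τ := by
          apply pow_lt_pow_left₀ (hσstrict ss i hlt) (le_of_lt (hσpos i)); norm_num
        rcases mul_eq_zero.mp this with h | h
        · linarith
        · exact h
      have hwss : w ss = 0 := by
        have hsplit : ∀ i : Fin k, w i = (if (i : ℕ) < s then 1 else 0)
            + (if i = ss then w ss else 0) := by
          intro i
          rcases lt_trichotomy (i : ℕ) s with h | h | h
          · have : i ≠ ss := by intro hc; rw [hc] at h; simp [hss] at h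
            simp [h, this, hw_lt i h]
          · have : i = ss := Fin.ext (by simp [hss, h])
            simp [this, hss]
          · have hne : i ≠ ss := by intro hc; rw [hc] at h; simp [hss] at h
            have hns : ¬ ((i : ℕ) < s) := by omega
            simp [hns, hne, hw_gt i h]
        have : (∑ i, w i) = (s : ℝ) + w ss := by
          calc (∑ i, w i) = ∑ i : Fin k, ((if (i : ℕ) < s then 1 else 0)
              + (if i = ss then w ss else 0)) := Finset.sum_congr rfl fun i _ => hsplit i
            _ = (s : ℝ) * 1 + w ss := by
                rw [Finset.sum_add_distrib, sum_ite_lt_count (le_of_lt hsk), Finset.sum_ite_eq']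
                simp
            _ = (s : ℝ) + w ss := by ring
        rw [hwsum] at this; linarith
      intro i
      rcases lt_trichotomy (i : ℕ) s with h | h | h
      · simp [h, hw_lt i h]
      · have : i = ss := Fin.ext (by simp [hss, h])
        rw [this, hwss]; simp [hss]
      · have hns : ¬ ((i : ℕ) < s) := by omega
        simp [hns, hw_gt i h]

lemma norm_sq_eucl {q : ℕ} (y : EuclideanSpace ℝ (Fin q)) : ‖y‖ ^ 2 = ∑ i, y i ^ 2 := by
  rw [← real_inner_self_eq_norm_sq, PiLp.inner_apply]
  simp [sq]

def frobSq {m n : ℕ} (M : Matrix (Fin m) (Fin n) ℝ) : ℝ := ∑ i, ∑ j, M i j ^ 2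

lemma parseval' {E : Type*} [NormedAddCommGroup E] [InnerProductSpace ℝ E] {ι : Type*}
    [Fintype ι] (b : OrthonormalBasis ι ℝ E)
    (x : E) : ∑ i, ⟪b i, x⟫ ^ 2 = ‖x‖ ^ 2 := by
  rw [← real_inner_self_eq_norm_sq, ← b.sum_inner_mul_inner x x]
  exact Finset.sum_congr rfl fun i _ => by rw [sq, real_inner_comm (b i) x]

lemma onb_sum_indep {m n : ℕ} (T : EuclideanSpace ℝ (Fin n) →ₗ[ℝ] EuclideanSpace ℝ (Fin m))
    (f : OrthonormalBasis (Fin n) ℝ (EuclideanSpace ℝ (Fin n)))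
    (g : OrthonormalBasis (Fin m) ℝ (EuclideanSpace ℝ (Fin m))) :
    ∑ l, ‖T (f l)‖ ^ 2 = ∑ i, ‖LinearMap.adjoint T (g i)‖ ^ 2 := by
  have h1 : ∀ l, ‖T (f l)‖ ^ 2 = ∑ i, ⟪g i, T (f l)⟫ ^ 2 := fun l => (parseval' g _).symm
  have h2 : ∀ i, ‖LinearMap.adjoint T (g i)‖ ^ 2 = ∑ l, ⟪f l, LinearMap.adjoint T (g i)⟫ ^ 2 :=
    fun i => (parseval' f _).symm
  simp only [h1, h2]
  rw [Finset.sum_comm]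
  refine Finset.sum_congr rfl fun i _ => Finset.sum_congr rfl fun l _ => ?_
  rw [LinearMap.adjoint_inner_right, real_inner_comm]

lemma frobSq_eq_sum_onb {m n : ℕ} (M : Matrix (Fin m) (Fin n) ℝ)
    (f : OrthonormalBasis (Fin n) ℝ (EuclideanSpace ℝ (Fin n))) :
    frobSq M = ∑ l, ‖Matrix.toEuclideanLin M (f l)‖ ^ 2 := by
  set e : OrthonormalBasis (Fin n) ℝ (EuclideanSpace ℝ (Fin n)) := EuclideanSpace.basisFun (Fin n) ℝ with he
  set g : OrthonormalBasis (Fin m) ℝ (EuclideanSpace ℝ (Fin m)) := EuclideanSpace.basisFun (Fin m) ℝ with hg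
  rw [onb_sum_indep _ f g, ← onb_sum_indep _ e g]
  have key : ∀ l, ‖Matrix.toEuclideanLin M (e l)‖ ^ 2 = ∑ i, M i l ^ 2 := by
    intro l
    rw [norm_sq_eucl]
    refine Finset.sum_congr rfl fun i _ => ?_
    have : (Matrix.toEuclideanLin M (e l)) i = M i l := by
      simp [he, Matrix.toEuclideanLin_apply, Matrix.mulVec, dotProduct,
        EuclideanSpace.basisFun_apply, EuclideanSpace.single_apply]
    rw [this]
  simp only [key]
  rw [frobSq, Finset.sum_comm]


set_option maxHeartbeats 2000000 in
lemma EYcore {m n k : ℕ} (hkn : k ≤ n)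
    (σ : Fin k → ℝ) (hσpos : ∀ i, 0 < σ i) (hσstrict : ∀ i j : Fin k, i < j → σ j < σ i)
    (uE : Fin k → EuclideanSpace ℝ (Fin m)) (vE : Fin k → EuclideanSpace ℝ (Fin n))
    (hu : Orthonormal ℝ uE) (hv : Orthonormal ℝ vE)
    (s : ℕ) (c : Fin s → EuclideanSpace ℝ (Fin m))
    (B : EuclideanSpace ℝ (Fin n) →ₗ[ℝ] EuclideanSpace ℝ (Fin m))
    (hB : ∀ x, B x ∈ Submodule.span ℝ (Set.range c))
    (T Ts : EuclideanSpace ℝ (Fin n) →ₗ[ℝ] EuclideanSpace ℝ (Fin m))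
    (hT : ∀ x, T x = ∑ i : Fin k, (σ i * ⟪vE i, x⟫) • uE i)
    (hTs : ∀ x, Ts x = ∑ i : Fin k, (if (i : ℕ) < s then σ i * ⟪vE i, x⟫ else 0) • uE i)
    (f : OrthonormalBasis (Fin n) ℝ (EuclideanSpace ℝ (Fin n)))
    (hf : ∀ i : Fin k, f (Fin.castLE hkn i) = vE i) :
    (∑ i : Fin k, if s ≤ (i : ℕ) then σ i ^ 2 else 0) ≤ (∑ l, ‖(T - B) (f l)‖ ^ 2) ∧
    ((∑ l, ‖(T - B) (f l)‖ ^ 2) = (∑ i : Fin k, if s ≤ (i : ℕ) then σ i ^ 2 else 0) → B = Ts) := by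
  classical
  set S : Submodule ℝ (EuclideanSpace ℝ (Fin m)) := Submodule.span ℝ (Set.range c) with hS
  set P : EuclideanSpace ℝ (Fin m) → EuclideanSpace ℝ (Fin m) :=
    fun x => ((S.orthogonalProjectionOnto x : S) : EuclideanSpace ℝ (Fin m)) with hP
  have hPmem : ∀ x, P x ∈ S := fun x => (S.orthogonalProjectionOnto x).2
  have pyth : ∀ (x y : EuclideanSpace ℝ (Fin m)), y ∈ S →
      ‖x - P x‖ ^ 2 + ‖P x - y‖ ^ 2 = ‖x - y‖ ^ 2 := by
    intro x y hy
    have h1 : x - P x ∈ Sᗮ := S.sub_starProjection_mem_orthogonal x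
    have h2 : P x - y ∈ S := Submodule.sub_mem S (hPmem x) hy
    have hinner : ⟪x - P x, P x - y⟫ = 0 := by
      rw [real_inner_comm]
      exact h1 _ h2
    have hxy : x - y = (x - P x) + (P x - y) := by abel
    rw [hxy, norm_add_sq_real, hinner]
    ring
  have norm_split : ∀ x : EuclideanSpace ℝ (Fin m), ‖x - P x‖ ^ 2 = ‖x‖ ^ 2 - ‖P x‖ ^ 2 := by
    intro x
    have := pyth x 0 (Submodule.zero_mem S)
    simp only [sub_zero] at this
    linarith
  have hPsmul : ∀ (a : ℝ) (x : EuclideanSpace ℝ (Fin m)), P (a • x) = a • P x := by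
    intro a x
    simp only [hP, LinearMapClass.map_smul, Submodule.coe_smul]
  have hP0 : P 0 = 0 := by simp [hP]
  set w : Fin k → ℝ := fun i => ‖P (uE i)‖ ^ 2 with hw
  have hunorm : ∀ i, ‖uE i‖ = 1 := hu.1
  have hw0 : ∀ i, 0 ≤ w i := fun i => sq_nonneg _
  have hw1 : ∀ i, w i ≤ 1 := by
    intro i
    have h1 := norm_split (uE i)
    have h2 : (0:ℝ) ≤ ‖uE i - P (uE i)‖ ^ 2 := sq_nonneg _
    rw [hunorm i] at h1
    simp only [hw]
    nlinarith
  have hsum : (∑ i, w i) ≤ s := by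
    set g := stdOrthonormalBasis ℝ S with hg
    have hwi : ∀ i, w i = ∑ l, ⟪((g l : S) : EuclideanSpace ℝ (Fin m)), uE i⟫ ^ 2 := by
      intro i
      have h1 : w i = ‖S.orthogonalProjectionOnto (uE i)‖ ^ 2 := by
        simp only [hw, hP]
        norm_num
      have h2 := parseval' g (S.orthogonalProjectionOnto (uE i))
      rw [h1, ← h2]
      refine Finset.sum_congr rfl fun l _ => ?_
      rw [Submodule.coe_inner]
      have h3 : ⟪((g l : S) : EuclideanSpace ℝ (Fin m)), uE i - P (uE i)⟫ = 0 :=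
        (S.sub_starProjection_mem_orthogonal (uE i)) _ (g l).2
      have h4 : ⟪((g l : S) : EuclideanSpace ℝ (Fin m)), uE i⟫
          = ⟪((g l : S) : EuclideanSpace ℝ (Fin m)), P (uE i)⟫ := by
        have h5 := inner_sub_right (𝕜 := ℝ) ((g l : S) : EuclideanSpace ℝ (Fin m)) (uE i) (P (uE i))
        rw [h3] at h5
        linarith
      rw [← h4]
    have hbessel : ∀ l, (∑ i, ⟪((g l : S) : EuclideanSpace ℝ (Fin m)), uE i⟫ ^ 2) ≤ 1 := by
      intro l
      have hb := hu.sum_inner_products_le (s := Finset.univ) ((g l : S) : EuclideanSpace ℝ (Fin m))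
      have hgn : ‖((g l : S) : EuclideanSpace ℝ (Fin m))‖ = 1 := by
        rw [Submodule.norm_coe]
        exact g.orthonormal.1 l
      rw [hgn] at hb
      simp only [one_pow] at hb
      calc (∑ i, ⟪((g l : S) : EuclideanSpace ℝ (Fin m)), uE i⟫ ^ 2)
          = ∑ i, ‖⟪uE i, ((g l : S) : EuclideanSpace ℝ (Fin m))⟫‖ ^ 2 := by
            refine Finset.sum_congr rfl fun i _ => ?_
            rw [Real.norm_eq_abs, sq_abs, real_inner_comm]
        _ ≤ 1 := hb
    have hrank : (Module.finrank ℝ S : ℝ) ≤ (s : ℝ) := by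
      have h1 : Module.finrank ℝ S ≤ s := by
        have h2 : Module.finrank ℝ S ≤ (Set.range c).toFinset.card := finrank_span_le_card _
        have h3 : (Set.range c).toFinset.card ≤ s := by
          rw [Set.toFinset_card]
          simpa using Fintype.card_range_le c
        exact le_trans h2 h3
      exact_mod_cast h1
    calc (∑ i, w i) = ∑ i : Fin k, ∑ l, ⟪((g l : S) : EuclideanSpace ℝ (Fin m)), uE i⟫ ^ 2 :=
          Finset.sum_congr rfl fun i _ => hwi i
      _ = ∑ l, ∑ i : Fin k, ⟪((g l : S) : EuclideanSpace ℝ (Fin m)), uE i⟫ ^ 2 :=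
          Finset.sum_comm
      _ ≤ ∑ l : Fin (Module.finrank ℝ S), (1:ℝ) := Finset.sum_le_sum fun l _ => hbessel l
      _ = (Module.finrank ℝ S : ℝ) := by simp
      _ ≤ (s : ℝ) := hrank
  -- values of T and Ts on the basis
  have hvinner : ∀ i i' : Fin k, ⟪vE i, vE i'⟫ = if i = i' then (1:ℝ) else 0 :=
    fun i i' => orthonormal_iff_ite.mp hv i i'
  have hTf1 : ∀ i : Fin k, T (f (Fin.castLE hkn i)) = σ i • uE i := by
    intro i
    rw [hT, hf]
    have hterm : ∀ i' : Fin k, (σ i' * ⟪vE i', vE i⟫) • uE i'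
        = if i' = i then σ i • uE i else 0 := by
      intro i'
      rw [hvinner i' i]
      by_cases h : i' = i
      · subst h; simp
      · simp [h]
    rw [Finset.sum_congr rfl fun i' _ => hterm i', Finset.sum_ite_eq']
    simp
  have hTsf1 : ∀ i : Fin k, Ts (f (Fin.castLE hkn i))
      = (if (i : ℕ) < s then σ i else 0) • uE i := by
    intro i
    rw [hTs, hf]
    have hterm : ∀ i' : Fin k, (if (i' : ℕ) < s then σ i' * ⟪vE i', vE i⟫ else 0) • uE i'
        = if i' = i then (if (i : ℕ) < s then σ i else 0) • uE i else 0 := by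
      intro i'
      rw [hvinner i' i]
      by_cases h : i' = i
      · subst h
        by_cases h2 : (i' : ℕ) < s <;> simp [h2]
      · by_cases h2 : (i' : ℕ) < s <;> simp [h, h2]
    rw [Finset.sum_congr rfl fun i' _ => hterm i', Finset.sum_ite_eq']
    simp
  have hvf0 : ∀ (i' : Fin k) (l : Fin n), ¬ ((l : ℕ) < k) → ⟪vE i', f l⟫ = 0 := by
    intro i' l hl
    have hne : Fin.castLE hkn i' ≠ l := by
      intro hc
      apply hl
      rw [← hc]
      simpa using i'.2
    rw [← hf i']
    exact f.orthonormal.2 hne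
  have hTf0 : ∀ l : Fin n, ¬ ((l : ℕ) < k) → T (f l) = 0 := by
    intro l hl
    rw [hT]
    refine Finset.sum_eq_zero fun i' _ => ?_
    rw [hvf0 i' l hl]
    simp
  have hTsf0 : ∀ l : Fin n, ¬ ((l : ℕ) < k) → Ts (f l) = 0 := by
    intro l hl
    rw [hTs]
    refine Finset.sum_eq_zero fun i' _ => ?_
    rw [hvf0 i' l hl]
    simp
  -- main decomposition
  have hsub : ∀ l, (T - B) (f l) = T (f l) - B (f l) := fun l => rfl
  set Q : Fin n → ℝ := fun l => ‖T (f l) - P (T (f l))‖ ^ 2 with hQ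
  set R : Fin n → ℝ := fun l => ‖P (T (f l)) - B (f l)‖ ^ 2 with hR
  have hsplit : ∀ l, ‖(T - B) (f l)‖ ^ 2 = Q l + R l := by
    intro l
    rw [hsub]
    exact (pyth (T (f l)) (B (f l)) (hB (f l))).symm
  have hQcast : ∀ i : Fin k, Q (Fin.castLE hkn i) = σ i ^ 2 * (1 - w i) := by
    intro i
    simp only [hQ]
    rw [hTf1 i, hPsmul, ← smul_sub, norm_smul, Real.norm_eq_abs, mul_pow, sq_abs, norm_split,
      hunorm i, one_pow]
  have hQsum : (∑ l, Q l) = ∑ i : Fin k, σ i ^ 2 * (1 - w i) := by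
    rw [sum_support_lt hkn Q (by
      intro l hl
      simp only [hQ]
      rw [hTf0 l hl, hP0, sub_zero, norm_zero]
      norm_num)]
    exact Finset.sum_congr rfl fun i _ => hQcast i
  have htot : (∑ l, ‖(T - B) (f l)‖ ^ 2)
      = (∑ i : Fin k, σ i ^ 2 * (1 - w i)) + ∑ l, R l := by
    rw [← hQsum, ← Finset.sum_add_distrib]
    exact Finset.sum_congr rfl fun l _ => hsplit l
  have hRnn : ∀ l, 0 ≤ R l := fun l => sq_nonneg _
  have hRsum : 0 ≤ ∑ l, R l := Finset.sum_nonneg fun l _ => hRnn l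
  obtain ⟨hlow, heqw⟩ := wlem s σ hσpos hσstrict w hw0 hw1 hsum
  constructor
  · rw [htot]
    linarith
  · intro heq
    rw [htot] at heq
    have hA1 : (∑ i : Fin k, σ i ^ 2 * (1 - w i)) = ∑ i : Fin k, if s ≤ (i : ℕ) then σ i ^ 2 else 0 := by
      linarith
    have hA2 : (∑ l, R l) = 0 := by linarith
    have hwv := heqw hA1
    have hBf : ∀ l, B (f l) = P (T (f l)) := by
      intro l
      have hRl : R l = 0 :=
        (Finset.sum_eq_zero_iff_of_nonneg fun l _ => hRnn l).mp hA2 l (Finset.mem_univ l)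
      simp only [hR] at hRl
      have h1 : P (T (f l)) - B (f l) = 0 := by
        have := (pow_eq_zero_iff (two_ne_zero)).mp hRl
        exact norm_eq_zero.mp this
      have := sub_eq_zero.mp h1
      exact this.symm
    have hBTs : ∀ l, B (f l) = Ts (f l) := by
      intro l
      by_cases hl : (l : ℕ) < k
      · set i : Fin k := ⟨(l : ℕ), hl⟩ with hi
        have hli : l = Fin.castLE hkn i := Fin.ext rfl
        rw [hli, hBf, hTf1 i, hTsf1 i, hPsmul]
        by_cases his : (i : ℕ) < s
        · have hwi1 : w i = 1 := by rw [hwv i, if_pos his]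
          have hPu : P (uE i) = uE i := by
            have h2 := norm_split (uE i)
            rw [hunorm i, one_pow] at h2
            have h3 : ‖uE i - P (uE i)‖ ^ 2 = 0 := by
              rw [h2]
              simp only [hw] at hwi1 ⊢
              rw [hwi1]
              ring
            have h4 := norm_eq_zero.mp ((pow_eq_zero_iff (two_ne_zero)).mp h3)
            have := sub_eq_zero.mp h4
            exact this.symm
          rw [hPu, if_pos his]
        · have hwi0 : w i = 0 := by rw [hwv i, if_neg his]
          have hPu : P (uE i) = 0 := by
            simp only [hw] at hwi0
            exact norm_eq_zero.mp ((pow_eq_zero_iff (two_ne_zero)).mp hwi0)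
          rw [hPu, if_neg his, smul_zero, zero_smul]
      · rw [hBf, hTf0 l hl, hP0, hTsf0 l hl]
    refine f.toBasis.ext fun l => ?_
    rw [OrthonormalBasis.coe_toBasis]
    exact hBTs l

lemma inner_toE' {q : ℕ} (x : Fin q → ℝ) (y : EuclideanSpace ℝ (Fin q)) :
    ⟪toE x, y⟫ = ∑ i, x i * y i := by
  simp [toE, PiLp.inner_apply, RCLike.inner_apply]
  exact Finset.sum_congr rfl fun i _ => mul_comm _ _

lemma toEuclideanLin_vecMulVec {m n : ℕ} (a : Fin m → ℝ) (b : Fin n → ℝ)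
    (x : EuclideanSpace ℝ (Fin n)) :
    Matrix.toEuclideanLin (Matrix.vecMulVec a b) x = ⟪toE b, x⟫ • toE a := by
  ext p
  have hL : Matrix.toEuclideanLin (Matrix.vecMulVec a b) x p = ∑ j, (a p * b j) * x j := by
    simp only [Matrix.toEuclideanLin_apply, Matrix.vecMulVec_apply]
    rfl
  have hR : (⟪toE b, x⟫ • toE a) p = (∑ j, b j * x j) * a p := by
    rw [inner_toE']
    simp [toE]
  rw [hL, hR, Finset.sum_mul]
  exact Finset.sum_congr rfl fun j _ => by ring

lemma toEuclideanLin_sum_smul_vecMulVec {m n k : ℕ} (g : Fin k → ℝ)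
    (u : Fin k → Fin m → ℝ) (v : Fin k → Fin n → ℝ) (x : EuclideanSpace ℝ (Fin n)) :
    Matrix.toEuclideanLin (∑ i, g i • Matrix.vecMulVec (u i) (v i)) x
      = ∑ i, (g i * ⟪toE (v i), x⟫) • toE (u i) := by
  rw [map_sum]
  rw [LinearMap.sum_apply]
  refine Finset.sum_congr rfl fun i _ => ?_
  rw [_root_.map_smul, LinearMap.smul_apply, toEuclideanLin_vecMulVec, smul_smul, mul_comm]

lemma orthonormal_toE {q k : ℕ} (u : Fin k → Fin q → ℝ)
    (hu : ∀ i j : Fin k, (∑ t, u i t * u j t) = if i = j then (1 : ℝ) else 0) :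
    Orthonormal ℝ (fun i => toE (u i)) := by
  rw [orthonormal_iff_ite]
  intro i j
  rw [inner_toE]
  exact hu i j

lemma exists_onb_ext {n k : ℕ} (hkn : k ≤ n) (vE : Fin k → EuclideanSpace ℝ (Fin n))
    (hv : Orthonormal ℝ vE) :
    ∃ f : OrthonormalBasis (Fin n) ℝ (EuclideanSpace ℝ (Fin n)),
      ∀ i : Fin k, f (Fin.castLE hkn i) = vE i := by
  classical
  set sset : Set (Fin n) := {l | (l : ℕ) < k} with hsset
  set v' : Fin n → EuclideanSpace ℝ (Fin n) :=
    fun l => if h : (l : ℕ) < k then vE ⟨(l : ℕ), h⟩ else 0 with hv'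
  have hcard : Module.finrank ℝ (EuclideanSpace ℝ (Fin n)) = Fintype.card (Fin n) := by
    simp [finrank_euclideanSpace]
  have horth : Orthonormal ℝ (sset.restrict v') := by
    rw [orthonormal_iff_ite]
    intro a b
    have ha' : ((a : Fin n) : ℕ) < k := a.2
    have hb' : ((b : Fin n) : ℕ) < k := b.2
    have ha : sset.restrict v' a = vE ⟨(a : Fin n), ha'⟩ := by
      simp only [Set.restrict_apply, hv']
      exact dif_pos ha'
    have hb : sset.restrict v' b = vE ⟨(b : Fin n), hb'⟩ := by
      simp only [Set.restrict_apply, hv']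
      exact dif_pos hb'
    rw [ha, hb, orthonormal_iff_ite.mp hv]
    by_cases h : a = b
    · subst h; simp
    · have h2 : (⟨(a : Fin n), ha'⟩ : Fin k) ≠ ⟨(b : Fin n), hb'⟩ := by
        intro hc
        exact h (Subtype.ext (Fin.ext (by simpa using hc)))
      rw [if_neg h2, if_neg h]
  obtain ⟨f, hf⟩ := horth.exists_orthonormalBasis_extension_of_card_eq hcard
  refine ⟨f, fun i => ?_⟩
  have hmem : Fin.castLE hkn i ∈ sset := by
    simp only [hsset, Set.mem_setOf_eq, Fin.coe_castLE]
    exact i.2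
  rw [hf _ hmem]
  simp only [hv', Fin.coe_castLE]
  rw [dif_pos i.2]

lemma lrProd_toE_mem_span {m n r s' : ℕ} (hsr : s' ≤ r)
    (U : Matrix (Fin m) (Fin r) ℝ) (V : Matrix (Fin n) (Fin r) ℝ)
    (x : EuclideanSpace ℝ (Fin n)) :
    Matrix.toEuclideanLin (lrProd s' U V) x ∈
      Submodule.span ℝ (Set.range fun t : Fin s' => toE (fun i => U i (Fin.castLE hsr t))) := by
  classical
  have hrepr : Matrix.toEuclideanLin (lrProd s' U V) x
      = ∑ t : Fin r, (if (t : ℕ) < s' then (∑ j, V j t * x j) else 0) • toE (fun i => U i t) := by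
    ext p
    have hL : Matrix.toEuclideanLin (lrProd s' U V) x p
        = ∑ j, (∑ t : Fin r, if (t : ℕ) < s' then U p t * V j t else 0) * x j := by
      simp only [Matrix.toEuclideanLin_apply, lrProd, Matrix.of_apply]
      rfl
    have hR : (∑ t : Fin r, (if (t : ℕ) < s' then (∑ j, V j t * x j) else 0) • toE (fun i => U i t)) p
        = ∑ t : Fin r, (if (t : ℕ) < s' then (∑ j, V j t * x j) else 0) * U p t := by
      rw [WithLp.ofLp_sum, Finset.sum_apply]
      rfl
    rw [hL, hR]
    calc (∑ j, (∑ t : Fin r, if (t : ℕ) < s' then U p t * V j t else 0) * x j)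
        = ∑ j, ∑ t : Fin r, (if (t : ℕ) < s' then U p t * V j t else 0) * x j := by
          refine Finset.sum_congr rfl fun j _ => ?_
          rw [Finset.sum_mul]
      _ = ∑ t : Fin r, ∑ j, (if (t : ℕ) < s' then U p t * V j t else 0) * x j :=
          Finset.sum_comm
      _ = ∑ t : Fin r, (if (t : ℕ) < s' then (∑ j, V j t * x j) else 0) * U p t := by
          refine Finset.sum_congr rfl fun t _ => ?_
          by_cases ht : (t : ℕ) < s'
          · simp only [ht, if_true]
            rw [Finset.sum_mul]
            exact Finset.sum_congr rfl fun j _ => by ring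
          · simp [ht]
  rw [hrepr]
  refine Submodule.sum_mem _ fun t _ => ?_
  by_cases ht : (t : ℕ) < s'
  · refine Submodule.smul_mem _ _ (Submodule.subset_span ?_)
    exact ⟨⟨(t : ℕ), ht⟩, by congr 1⟩
  · rw [if_neg ht, zero_smul]
    exact Submodule.zero_mem _

lemma frobSq_sum_smul_vecMulVec {m n k : ℕ} (g : Fin k → ℝ)
    (u : Fin k → Fin m → ℝ) (v : Fin k → Fin n → ℝ)
    (hu : ∀ i j : Fin k, (∑ t, u i t * u j t) = if i = j then (1:ℝ) else 0)
    (hv : ∀ i j : Fin k, (∑ t, v i t * v j t) = if i = j then (1:ℝ) else 0) :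
    frobSq (∑ i, g i • Matrix.vecMulVec (u i) (v i)) = ∑ i, g i ^ 2 := by
  classical
  have hentry : ∀ p q, (∑ i, g i • Matrix.vecMulVec (u i) (v i)) p q
      = ∑ i, g i * (u i p * v i q) := by
    intro p q
    rw [Matrix.sum_apply]
    exact Finset.sum_congr rfl fun i _ => by
      rw [Matrix.smul_apply, Matrix.vecMulVec_apply, smul_eq_mul]
  have step1 : frobSq (∑ i, g i • Matrix.vecMulVec (u i) (v i))
      = ∑ p, ∑ q, ∑ i, ∑ i', (g i * (u i p * v i q)) * (g i' * (u i' p * v i' q)) := by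
    unfold frobSq
    refine Finset.sum_congr rfl fun p _ => Finset.sum_congr rfl fun q _ => ?_
    rw [hentry, sq, Finset.sum_mul_sum]
  have step2 : (∑ p, ∑ q, ∑ i, ∑ i', (g i * (u i p * v i q)) * (g i' * (u i' p * v i' q)))
      = ∑ i, ∑ i', ∑ p, ∑ q, (g i * (u i p * v i q)) * (g i' * (u i' p * v i' q)) := by
    calc (∑ p, ∑ q, ∑ i, ∑ i', (g i * (u i p * v i q)) * (g i' * (u i' p * v i' q)))
        = ∑ p, ∑ i, ∑ q, ∑ i', (g i * (u i p * v i q)) * (g i' * (u i' p * v i' q)) := by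
          exact Finset.sum_congr rfl fun p _ => Finset.sum_comm
      _ = ∑ i, ∑ p, ∑ q, ∑ i', (g i * (u i p * v i q)) * (g i' * (u i' p * v i' q)) :=
          Finset.sum_comm
      _ = ∑ i, ∑ p, ∑ i', ∑ q, (g i * (u i p * v i q)) * (g i' * (u i' p * v i' q)) := by
          exact Finset.sum_congr rfl fun i _ => Finset.sum_congr rfl fun p _ => Finset.sum_comm
      _ = ∑ i, ∑ i', ∑ p, ∑ q, (g i * (u i p * v i q)) * (g i' * (u i' p * v i' q)) := by
          exact Finset.sum_congr rfl fun i _ => Finset.sum_comm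
  have step3 : (∑ i, ∑ i', ∑ p, ∑ q, (g i * (u i p * v i q)) * (g i' * (u i' p * v i' q)))
      = ∑ i, ∑ i', (g i * g i') * ((∑ p, u i p * u i' p) * (∑ q, v i q * v i' q)) := by
    refine Finset.sum_congr rfl fun i _ => Finset.sum_congr rfl fun i' _ => ?_
    rw [Finset.sum_mul_sum, Finset.mul_sum]
    refine Finset.sum_congr rfl fun p _ => ?_
    rw [Finset.mul_sum]
    refine Finset.sum_congr rfl fun q _ => ?_
    ring
  rw [step1, step2, step3]
  have step4 : ∀ i : Fin k, (∑ i', (g i * g i')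
      * ((∑ p, u i p * u i' p) * (∑ q, v i q * v i' q))) = g i ^ 2 := by
    intro i
    have hterm : ∀ i' : Fin k, (g i * g i') * ((∑ p, u i p * u i' p) * (∑ q, v i q * v i' q))
        = if i' = i then g i ^ 2 else 0 := by
      intro i'
      rw [hu i i', hv i i']
      by_cases h : i = i'
      · subst h; simp [sq]
      · have h' : i' ≠ i := fun hc => h hc.symm
        simp [h, h']
    rw [Finset.sum_congr rfl fun i' _ => hterm i', Finset.sum_ite_eq']
    simp
  exact Finset.sum_congr rfl fun i _ => step4 i

lemma EYmat {m n k : ℕ} (hkm : k ≤ m) (hkn : k ≤ n)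
    (σ : Fin k → ℝ) (hσpos : ∀ i, 0 < σ i) (hσstrict : ∀ i j : Fin k, i < j → σ j < σ i)
    (u : Fin k → Fin m → ℝ) (v : Fin k → Fin n → ℝ)
    (hu : ∀ i j : Fin k, (∑ t, u i t * u j t) = if i = j then (1:ℝ) else 0)
    (hv : ∀ i j : Fin k, (∑ t, v i t * v j t) = if i = j then (1:ℝ) else 0)
    (s' r : ℕ) (hsr : s' ≤ r)
    (U : Matrix (Fin m) (Fin r) ℝ) (V : Matrix (Fin n) (Fin r) ℝ) :
    (∑ i : Fin k, if s' ≤ (i : ℕ) then σ i ^ 2 else 0)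
      ≤ frobSq (lrProd s' U V - ∑ i, σ i • Matrix.vecMulVec (u i) (v i)) ∧
    (frobSq (lrProd s' U V - ∑ i, σ i • Matrix.vecMulVec (u i) (v i))
        = (∑ i : Fin k, if s' ≤ (i : ℕ) then σ i ^ 2 else 0) →
      lrProd s' U V
        = ∑ i : Fin k, if (i : ℕ) < s' then σ i • Matrix.vecMulVec (u i) (v i) else 0) := by
  classical
  set uE : Fin k → EuclideanSpace ℝ (Fin m) := fun i => toE (u i) with huE
  set vE : Fin k → EuclideanSpace ℝ (Fin n) := fun i => toE (v i) with hvE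
  have huO : Orthonormal ℝ uE := orthonormal_toE u hu
  have hvO : Orthonormal ℝ vE := orthonormal_toE v hv
  obtain ⟨f, hf⟩ := exists_onb_ext hkn vE hvO
  set A : Matrix (Fin m) (Fin n) ℝ := ∑ i, σ i • Matrix.vecMulVec (u i) (v i) with hA
  set TsM : Matrix (Fin m) (Fin n) ℝ :=
    ∑ i : Fin k, if (i : ℕ) < s' then σ i • Matrix.vecMulVec (u i) (v i) else 0 with hTsM
  set B := Matrix.toEuclideanLin (lrProd s' U V) with hB
  set T := Matrix.toEuclideanLin A with hT
  set Ts := Matrix.toEuclideanLin TsM with hTs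
  have hTapp : ∀ x, T x = ∑ i : Fin k, (σ i * ⟪vE i, x⟫) • uE i := by
    intro x
    rw [hT, hA]
    exact toEuclideanLin_sum_smul_vecMulVec σ u v x
  have hTsM2 : TsM = ∑ i : Fin k, (if (i : ℕ) < s' then σ i else 0) • Matrix.vecMulVec (u i) (v i) := by
    rw [hTsM]
    refine Finset.sum_congr rfl fun i _ => ?_
    by_cases h : (i : ℕ) < s'
    · simp [h]
    · simp [h]
  have hTsapp : ∀ x, Ts x = ∑ i : Fin k, (if (i : ℕ) < s' then σ i * ⟪vE i, x⟫ else 0) • uE i := by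
    intro x
    rw [hTs, hTsM2, toEuclideanLin_sum_smul_vecMulVec]
    refine Finset.sum_congr rfl fun i _ => ?_
    rw [ite_mul, zero_mul]
  have hBmem := lrProd_toE_mem_span hsr U V
  obtain ⟨hlow, huniq⟩ := EYcore hkn σ hσpos hσstrict uE vE huO hvO s'
    (fun t : Fin s' => toE (fun i => U i (Fin.castLE hsr t))) B hBmem T Ts hTapp hTsapp f hf
  have hfr : frobSq (lrProd s' U V - A) = ∑ l, ‖(T - B) (f l)‖ ^ 2 := by
    rw [frobSq_eq_sum_onb _ f]
    refine Finset.sum_congr rfl fun l _ => ?_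
    have h1 : Matrix.toEuclideanLin (lrProd s' U V - A) (f l) = (B - T) (f l) := by
      rw [map_sub]
    rw [h1]
    have h2 : (B - T) (f l) = -((T - B) (f l)) := by
      simp only [LinearMap.sub_apply, LinearMap.neg_apply]
      abel
    rw [h2, norm_neg]
  constructor
  · rw [hfr]
    exact hlow
  · intro heq
    rw [hfr] at heq
    have := huniq heq
    have hmat : lrProd s' U V = TsM := Matrix.toEuclideanLin.injective this
    exact hmat

lemma continuous_sq_sum {n : ℕ} : Continuous fun x : Fin n → ℝ => ∑ i, x i ^ 2 := by
  fun_prop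

lemma measurableSet_euclBall {n : ℕ} : MeasurableSet (euclBall n) :=
  measurableSet_le continuous_sq_sum.measurable measurable_const

lemma isCompact_euclBall {n : ℕ} : IsCompact (euclBall n) := by
  have hclosed : IsClosed (euclBall n) := isClosed_le continuous_sq_sum continuous_const
  have hsub : euclBall n ⊆ Set.pi Set.univ fun _ : Fin n => Set.Icc (-1:ℝ) 1 := by
    intro x hx i _
    have h1 : x i ^ 2 ≤ 1 := by
      have h2 := Finset.single_le_sum (f := fun i => x i ^ 2)
        (fun i _ => sq_nonneg (x i)) (Finset.mem_univ i)
      exact le_trans h2 hx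
    constructor
    · nlinarith [h1, sq_nonneg (x i + 1)]
    · nlinarith [h1, sq_nonneg (x i - 1)]
  exact (isCompact_univ_pi fun _ => isCompact_Icc).of_isClosed_subset hclosed hsub

lemma volume_euclBall_ne_top {n : ℕ} : volume (euclBall n) ≠ ⊤ :=
  isCompact_euclBall.measure_ne_top

lemma volume_euclBall_pos {n : ℕ} (hn : 0 < n) : 0 < volume (euclBall n) := by
  have hnr : (0:ℝ) < (n:ℝ) := Nat.cast_pos.mpr hn
  have hsub : Metric.ball (0 : Fin n → ℝ) (1/n) ⊆ euclBall n := by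
    intro x hx
    simp only [Metric.mem_ball, dist_zero_right] at hx
    have hxi : ∀ i, x i ^ 2 ≤ (1/n)^2 := by
      intro i
      have h1 : ‖x i‖ ≤ ‖x‖ := norm_le_pi_norm x i
      have h2 : |x i| ≤ 1/n := le_of_lt (lt_of_le_of_lt h1 hx)
      calc x i ^ 2 = |x i| ^ 2 := (sq_abs _).symm
        _ ≤ (1/n)^2 := by
            apply pow_le_pow_left₀ (abs_nonneg _) h2
    show (∑ i, x i ^ 2) ≤ 1
    calc (∑ i, x i ^ 2) ≤ ∑ _i : Fin n, (1/(n:ℝ))^2 := Finset.sum_le_sum fun i _ => hxi i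
      _ = n * (1/n)^2 := by rw [Finset.sum_const, Finset.card_univ, Fintype.card_fin, nsmul_eq_mul]
      _ = 1/n := by field_simp
      _ ≤ 1 := by
        rw [div_le_one hnr]
        exact_mod_cast Nat.one_le_iff_ne_zero.mpr (Nat.pos_iff_ne_zero.mp hn)
  calc (0:ℝ≥0∞) < volume (Metric.ball (0 : Fin n → ℝ) (1/n)) :=
        Metric.measure_ball_pos _ _ (by positivity)
    _ ≤ volume (euclBall n) := measure_mono hsub

lemma integrableOn_mul_ball {n : ℕ} (j j' : Fin n) :
    IntegrableOn (fun x : Fin n → ℝ => x j * x j') (euclBall n) volume := by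
  have hc : Continuous fun x : Fin n → ℝ => x j * x j' := by fun_prop
  exact hc.continuousOn.integrableOn_compact isCompact_euclBall

lemma moment_cross {n : ℕ} (j j' : Fin n) (hjj : j ≠ j') :
    (∫ x in euclBall n, x j * x j') = 0 := by
  classical
  set eqs : ∀ _i : Fin n, ℝ ≃ᵐ ℝ := fun i =>
    if i = j then (Homeomorph.neg ℝ).toMeasurableEquiv else MeasurableEquiv.refl ℝ with heqs
  set E : (Fin n → ℝ) ≃ᵐ (Fin n → ℝ) := MeasurableEquiv.piCongrRight eqs with hE
  have hEapp : ∀ (x : Fin n → ℝ) (i : Fin n), E x i = if i = j then -(x i) else x i := by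
    intro x i
    by_cases h : i = j
    · simp only [hE, heqs]
      rw [if_pos h]
      show (if i = j then (Homeomorph.neg ℝ).toMeasurableEquiv else MeasurableEquiv.refl ℝ) (x i) = -(x i)
      rw [if_pos h]
      rfl
    · simp only [hE, heqs]
      rw [if_neg h]
      show (if i = j then (Homeomorph.neg ℝ).toMeasurableEquiv else MeasurableEquiv.refl ℝ) (x i) = x i
      rw [if_neg h]
      rfl
  have hmp : MeasurePreserving E volume volume := by
    have h1 : MeasurePreserving (fun (a : Fin n → ℝ) (i : Fin n) => eqs i (a i)) volume volume :=
      volume_preserving_pi fun i => by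
        by_cases h : i = j
        · simp only [heqs, if_pos h]
          exact Measure.measurePreserving_neg _
        · simp only [heqs, if_neg h]
          exact MeasurePreserving.id _
    exact h1
  have hpre : E ⁻¹' (euclBall n) = euclBall n := by
    ext x
    show (∑ i, (E x) i ^ 2) ≤ 1 ↔ (∑ i, x i ^ 2) ≤ 1
    have : ∀ i, (E x) i ^ 2 = x i ^ 2 := by
      intro i
      rw [hEapp]
      by_cases h : i = j
      · rw [if_pos h, neg_pow]
        ring
      · rw [if_neg h]
    rw [Finset.sum_congr rfl fun i _ => this i]
  have hint := hmp.setIntegral_preimage_emb E.measurableEmbedding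
    (fun x => x j * x j') (euclBall n)
  rw [hpre] at hint
  have hneg : (∫ x in euclBall n, (E x) j * (E x) j')
      = ∫ x in euclBall n, -(x j * x j') := by
    refine setIntegral_congr_fun measurableSet_euclBall fun x _ => ?_
    rw [hEapp, hEapp, if_pos rfl, if_neg (fun hc => hjj hc.symm)]
    ring
  rw [hneg, integral_neg] at hint
  linarith

lemma moment_diag {n : ℕ} (j j' : Fin n) :
    (∫ x in euclBall n, x j * x j) = ∫ x in euclBall n, x j' * x j' := by
  classical
  set e : Fin n ≃ Fin n := Equiv.swap j j' with he
  set E : (Fin n → ℝ) ≃ᵐ (Fin n → ℝ) := MeasurableEquiv.piCongrLeft (fun _ => ℝ) e with hE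
  have hEapp : ∀ (x : Fin n → ℝ) (i : Fin n), E x (e i) = x i := by
    intro x i
    show (Equiv.piCongrLeft (fun _ => ℝ) e) x (e i) = x i
    exact Equiv.piCongrLeft_apply_apply (fun _ => ℝ) e x i
  have hmp : MeasurePreserving E volume volume :=
    volume_measurePreserving_piCongrLeft (fun _ => ℝ) e
  have hpre : E ⁻¹' (euclBall n) = euclBall n := by
    ext x
    show (∑ i, (E x) i ^ 2) ≤ 1 ↔ (∑ i, x i ^ 2) ≤ 1
    have hsum : (∑ i, (E x) i ^ 2) = ∑ i, (E x) (e i) ^ 2 :=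
      (Fintype.sum_equiv e _ _ fun i => rfl).symm
    rw [hsum, Finset.sum_congr rfl fun i _ => by rw [hEapp]]
  have hint := hmp.setIntegral_preimage_emb E.measurableEmbedding
    (fun x => x j * x j) (euclBall n)
  rw [hpre] at hint
  have hval : (∫ x in euclBall n, (E x) j * (E x) j)
      = ∫ x in euclBall n, x j' * x j' := by
    refine setIntegral_congr_fun measurableSet_euclBall fun x _ => ?_
    have h1 : E x j = x j' := by
      have : e j' = j := Equiv.swap_apply_right j j'
      rw [← this, hEapp]
    rw [h1]
  rw [hval] at hint
  exact hint.symm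

lemma moment_pos {n : ℕ} (hn : 0 < n) (j : Fin n) :
    0 < ∫ x in euclBall n, x j * x j := by
  have hnr : (0:ℝ) < n := Nat.cast_pos.mpr hn
  set a : ℝ := 1/(2*n) with ha
  set b : ℝ := 1/n with hb
  have hapos : 0 < a := by rw [ha]; positivity
  have hab : a < b := by
    rw [ha, hb]
    apply one_div_lt_one_div_of_lt hnr
    linarith
  set S : Set (Fin n → ℝ) := Set.pi Set.univ (fun _ => Set.Icc a b) with hS
  have hSmeas : MeasurableSet S := MeasurableSet.univ_pi fun _ => measurableSet_Icc
  have hSsub : S ⊆ euclBall n := by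
    intro x hx
    show (∑ i, x i ^ 2) ≤ 1
    have hxi : ∀ i, x i ^ 2 ≤ b^2 := by
      intro i
      have h1 := hx i (Set.mem_univ i)
      have h2 : a ≤ x i := h1.1
      have h3 : x i ≤ b := h1.2
      nlinarith
    calc (∑ i, x i ^ 2) ≤ ∑ _i : Fin n, b^2 := Finset.sum_le_sum fun i _ => hxi i
      _ = n * b^2 := by rw [Finset.sum_const, Finset.card_univ, Fintype.card_fin, nsmul_eq_mul]
      _ = 1/n := by rw [hb]; field_simp
      _ ≤ 1 := by
        rw [div_le_one hnr]
        exact_mod_cast Nat.one_le_iff_ne_zero.mpr (Nat.pos_iff_ne_zero.mp hn)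
  have hvolS_pos : 0 < volume S := by
    rw [hS, volume_pi_pi]
    refine CanonicallyOrderedAdd.prod_pos.mpr fun i _ => ?_
    rw [Real.volume_Icc]
    exact ENNReal.ofReal_pos.mpr (by linarith)
  have hvolS_ne_top : volume S ≠ ⊤ :=
    ne_top_of_le_ne_top volume_euclBall_ne_top (measure_mono hSsub)
  have hlb : ∀ x ∈ S, a^2 ≤ x j * x j := by
    intro x hx
    have h1 := hx j (Set.mem_univ j)
    nlinarith [h1.1, h1.2]
  have hint_S : IntegrableOn (fun x : Fin n → ℝ => x j * x j) S volume :=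
    (integrableOn_mul_ball j j).mono_set hSsub
  have h2 := setIntegral_ge_of_const_le hSmeas hvolS_ne_top hlb hint_S
  have h3 : (∫ x in S, x j * x j) ≤ ∫ x in euclBall n, x j * x j :=
    setIntegral_mono_set (integrableOn_mul_ball j j)
      (Filter.Eventually.of_forall fun x => mul_self_nonneg (x j))
      (HasSubset.Subset.eventuallyLE hSsub)
  have h4 : (0:ℝ) < a^2 * (volume S).toReal :=
    mul_pos (pow_pos hapos 2) (ENNReal.toReal_pos (ne_of_gt hvolS_pos) hvolS_ne_top)
  rw [smul_eq_mul, measureReal_def] at h2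
  linarith

lemma integral_sqNorm_mulVec {m n : ℕ} (j0 : Fin n) (M : Matrix (Fin m) (Fin n) ℝ) :
    (∫ x in euclBall n, sqNorm (M.mulVec x))
      = (∫ x in euclBall n, x j0 * x j0) * frobSq M := by
  classical
  set c : ℝ := ∫ x in euclBall n, x j0 * x j0 with hc
  have hmom : ∀ j j' : Fin n, (∫ x in euclBall n, x j * x j')
      = if j = j' then c else 0 := by
    intro j j'
    by_cases h : j = j'
    · subst h
      rw [if_pos rfl, hc]
      exact moment_diag j j0
    · rw [if_neg h]
      exact moment_cross j j' h
  have hexp : ∀ x : Fin n → ℝ, sqNorm (M.mulVec x)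
      = ∑ i, ∑ j, ∑ j', (M i j * M i j') * (x j * x j') := by
    intro x
    unfold sqNorm
    refine Finset.sum_congr rfl fun i _ => ?_
    have h1 : (M.mulVec x) i = ∑ j, M i j * x j := rfl
    rw [h1, sq, Finset.sum_mul_sum]
    exact Finset.sum_congr rfl fun j _ => Finset.sum_congr rfl fun j' _ => by ring
  have hint : ∀ (i : Fin m) (j j' : Fin n),
      IntegrableOn (fun x : Fin n → ℝ => (M i j * M i j') * (x j * x j')) (euclBall n) volume :=
    fun i j j' => (integrableOn_mul_ball j j').const_mul _
  have step1 : (∫ x in euclBall n, sqNorm (M.mulVec x))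
      = ∑ i, ∑ j, ∑ j', (M i j * M i j') * (if j = j' then c else 0) := by
    rw [show (fun x : Fin n → ℝ => sqNorm (M.mulVec x))
        = fun x => ∑ i, ∑ j, ∑ j', (M i j * M i j') * (x j * x j') from funext hexp]
    rw [integral_finset_sum _ fun i _ => integrable_finset_sum _ fun j _ =>
      integrable_finset_sum _ fun j' _ => hint i j j']
    refine Finset.sum_congr rfl fun i _ => ?_
    rw [integral_finset_sum _ fun j _ => integrable_finset_sum _ fun j' _ => hint i j j']
    refine Finset.sum_congr rfl fun j _ => ?_
    rw [integral_finset_sum _ fun j' _ => hint i j j']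
    refine Finset.sum_congr rfl fun j' _ => ?_
    rw [integral_const_mul, hmom j j']
  rw [step1]
  unfold frobSq
  rw [Finset.mul_sum]
  refine Finset.sum_congr rfl fun i _ => ?_
  rw [Finset.mul_sum]
  refine Finset.sum_congr rfl fun j _ => ?_
  have h2 : ∀ j' : Fin n, (M i j * M i j') * (if j = j' then c else 0)
      = if j = j' then c * M i j ^ 2 else 0 := by
    intro j'
    by_cases h : j = j'
    · subst h; rw [if_pos rfl, if_pos rfl, sq]; ring
    · rw [if_neg h, if_neg h, mul_zero]
  rw [Finset.sum_congr rfl fun j' _ => h2 j', Finset.sum_ite_eq]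
  simp

lemma integrableOn_sqNorm_mulVec {m n : ℕ} (M : Matrix (Fin m) (Fin n) ℝ) :
    IntegrableOn (fun x : Fin n → ℝ => sqNorm (M.mulVec x)) (euclBall n) volume := by
  have hc : Continuous fun x : Fin n → ℝ => sqNorm (M.mulVec x) := by
    unfold sqNorm Matrix.mulVec dotProduct
    fun_prop
  exact hc.continuousOn.integrableOn_compact isCompact_euclBall

lemma nestedDataObj_eq {m n : ℕ} (j0 : Fin n) (A : Matrix (Fin m) (Fin n) ℝ)
    (U : Matrix (Fin m) (Fin (min m n)) ℝ) (V : Matrix (Fin n) (Fin (min m n)) ℝ) :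
    nestedDataObj A U V
      = (((volume (euclBall n))⁻¹).toReal * ((1 / (min m n : ℝ))
          * (∫ x in euclBall n, x j0 * x j0)))
        * ∑ b : Fin (min m n), frobSq (lrProd ((b : ℕ) + 1) U V - A) := by
  unfold nestedDataObj unifBall
  rw [integral_smul_measure]
  have hfun : (fun x : Fin n → ℝ => (1 / (min m n : ℝ)) * ∑ b : Fin (min m n),
      sqNorm ((lrProd ((b : ℕ) + 1) U V).mulVec x - A.mulVec x))
      = fun x => (1 / (min m n : ℝ)) * ∑ b : Fin (min m n),
      sqNorm ((lrProd ((b : ℕ) + 1) U V - A).mulVec x) := by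
    refine funext fun x => ?_
    congr 1
    refine Finset.sum_congr rfl fun b _ => ?_
    rw [Matrix.sub_mulVec]
  rw [hfun, integral_const_mul,
    integral_finset_sum _ fun b _ => integrableOn_sqNorm_mulVec _]
  have hsum : (∑ b : Fin (min m n), ∫ (a : Fin n → ℝ) in euclBall n,
      sqNorm ((lrProd ((b : ℕ) + 1) U V - A) *ᵥ a))
      = ∑ b : Fin (min m n), (∫ x in euclBall n, x j0 * x j0)
          * frobSq (lrProd ((b : ℕ) + 1) U V - A) :=
    Finset.sum_congr rfl fun b _ => integral_sqNorm_mulVec j0 _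
  rw [hsum, ← Finset.mul_sum, smul_eq_mul]
  ring

lemma achievable {m n k r : ℕ} (hkr : k ≤ r)
    (σ : Fin k → ℝ) (u : Fin k → Fin m → ℝ) (v : Fin k → Fin n → ℝ) (s' : ℕ) :
    lrProd s' (Matrix.of fun (i : Fin m) (t : Fin r) =>
        if h : (t : ℕ) < k then σ ⟨(t : ℕ), h⟩ * u ⟨(t : ℕ), h⟩ i else 0)
      (Matrix.of fun (j : Fin n) (t : Fin r) =>
        if h : (t : ℕ) < k then v ⟨(t : ℕ), h⟩ j else 0)
      = ∑ i : Fin k, if (i : ℕ) < s' then σ i • Matrix.vecMulVec (u i) (v i) else 0 := by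
  classical
  ext p q
  show (∑ t : Fin r, if (t : ℕ) < s' then
      (if h : (t : ℕ) < k then σ ⟨(t : ℕ), h⟩ * u ⟨(t : ℕ), h⟩ p else 0)
        * (if h : (t : ℕ) < k then v ⟨(t : ℕ), h⟩ q else 0) else 0) = _
  have h1 : ∀ t : Fin r, (if (t : ℕ) < s' then
      (if h : (t : ℕ) < k then σ ⟨(t : ℕ), h⟩ * u ⟨(t : ℕ), h⟩ p else 0)
        * (if h : (t : ℕ) < k then v ⟨(t : ℕ), h⟩ q else 0) else 0)
      = if h : (t : ℕ) < k then
          (if ((⟨(t : ℕ), h⟩ : Fin k) : ℕ) < s' then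
            σ ⟨(t : ℕ), h⟩ * (u ⟨(t : ℕ), h⟩ p * v ⟨(t : ℕ), h⟩ q) else 0) else 0 := by
    intro t
    by_cases hk : (t : ℕ) < k <;> by_cases hs : (t : ℕ) < s' <;> simp [hk, hs] <;> ring
  rw [Finset.sum_congr rfl fun t _ => h1 t,
    sum_dite_le hkr (fun i : Fin k => if (i : ℕ) < s' then σ i * (u i p * v i q) else 0)]
  rw [Matrix.sum_apply]
  refine Finset.sum_congr rfl fun i _ => ?_
  by_cases h : (i : ℕ) < s'
  · simp only [h, if_true, Matrix.smul_apply, Matrix.vecMulVec_apply, smul_eq_mul]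
  · simp only [h, if_false, Matrix.zero_apply]

lemma frobSq_trunc {m n k : ℕ} (σ : Fin k → ℝ)
    (u : Fin k → Fin m → ℝ) (v : Fin k → Fin n → ℝ)
    (hu : ∀ i j : Fin k, (∑ t, u i t * u j t) = if i = j then (1:ℝ) else 0)
    (hv : ∀ i j : Fin k, (∑ t, v i t * v j t) = if i = j then (1:ℝ) else 0) (s' : ℕ) :
    frobSq ((∑ i : Fin k, if (i : ℕ) < s' then σ i • Matrix.vecMulVec (u i) (v i) else 0)
        - ∑ i, σ i • Matrix.vecMulVec (u i) (v i))
      = ∑ i : Fin k, if s' ≤ (i : ℕ) then σ i ^ 2 else 0 := by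
  classical
  have hdiff : ((∑ i : Fin k, if (i : ℕ) < s' then σ i • Matrix.vecMulVec (u i) (v i) else 0)
        - ∑ i : Fin k, σ i • Matrix.vecMulVec (u i) (v i))
      = ∑ i : Fin k, ((if (i : ℕ) < s' then σ i else 0) - σ i) • Matrix.vecMulVec (u i) (v i) := by
    rw [← Finset.sum_sub_distrib]
    refine Finset.sum_congr rfl fun i _ => ?_
    rw [sub_smul]
    congr 1
    by_cases h : (i : ℕ) < s' <;> simp [h]
  rw [hdiff, frobSq_sum_smul_vecMulVec _ u v hu hv]
  refine Finset.sum_congr rfl fun i _ => ?_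
  by_cases h : (i : ℕ) < s'
  · have h2 : ¬ s' ≤ (i : ℕ) := by omega
    simp [h, h2]
  · have h2 : s' ≤ (i : ℕ) := by omega
    rw [if_neg h, if_pos h2, zero_sub, neg_sq]

end Stmt7Aux

open Stmt7Aux

set_option maxHeartbeats 2000000 in
/-- For `A` of rank `k` with distinct positive singular values
`σ₁ > … > σ_k > 0`, SVD `A = ∑_{i=1}^k σ_i ũ_i ṽ_iᵀ`, `r = min m n`, and `μ_n` the
uniform probability measure on the closed unit ball of `ℝ^n`: `(U,V)` is a global
minimizer of `F(U,V) = ∫ (1/r) ∑_{b=1}^r ‖U_{:b}V_{:b}ᵀ x − A x‖² dμ_n(x)` iff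
`U_{:b}V_{:b}ᵀ = ∑_{i=1}^{min(b,k)} σ_i ũ_i ṽ_iᵀ` for every `b ∈ {1,…,r}`, i.e. iff
it recovers the best rank-`b` approximation of `A` for every `b`. -/
theorem stmt7 {m n k : ℕ} (A : Matrix (Fin m) (Fin n) ℝ) (hk : k ≤ min m n)
    (σ : Fin k → ℝ) (hσpos : ∀ i, 0 < σ i)
    (hσstrict : ∀ i j : Fin k, i < j → σ j < σ i)
    (u : Fin k → Fin m → ℝ) (v : Fin k → Fin n → ℝ)
    (hu : ∀ i j : Fin k, (∑ t, u i t * u j t) = if i = j then (1 : ℝ) else 0)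
    (hv : ∀ i j : Fin k, (∑ t, v i t * v j t) = if i = j then (1 : ℝ) else 0)
    (hA : A = ∑ i : Fin k, σ i • Matrix.vecMulVec (u i) (v i))
    (hrank : A.rank = k) :
    ∀ (U : Matrix (Fin m) (Fin (min m n)) ℝ) (V : Matrix (Fin n) (Fin (min m n)) ℝ),
      (∀ (U' : Matrix (Fin m) (Fin (min m n)) ℝ) (V' : Matrix (Fin n) (Fin (min m n)) ℝ),
          nestedDataObj A U V ≤ nestedDataObj A U' V') ↔
      (∀ b : Fin (min m n), lrProd ((b : ℕ) + 1) U V =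
        ∑ i : Fin k, if (i : ℕ) < (b : ℕ) + 1 then σ i • Matrix.vecMulVec (u i) (v i)
          else 0) := by

  intro U V
  by_cases hr0 : min m n = 0
  · have hzero : ∀ (X : Matrix (Fin m) (Fin (min m n)) ℝ) (Y : Matrix (Fin n) (Fin (min m n)) ℝ),
        nestedDataObj A X Y = 0 := by
      intro X Y
      unfold nestedDataObj
      have h1 : ∀ x : Fin n → ℝ, (1 / (min m n : ℝ)) * ∑ b : Fin (min m n),
          sqNorm ((lrProd ((b : ℕ) + 1) X Y).mulVec x - A.mulVec x) = 0 := by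
        intro x
        haveI : IsEmpty (Fin (min m n)) := by rw [hr0]; infer_instance
        rw [Finset.univ_eq_empty, Finset.sum_empty, mul_zero]
      simp only [h1]
      exact integral_zero _ _
    constructor
    · intro _ b
      exact absurd b.2 (by omega)
    · intro _ U' V'
      rw [hzero U V, hzero U' V']
  · have hrpos : 0 < min m n := Nat.pos_of_ne_zero hr0
    have hm : 0 < m := lt_of_lt_of_le hrpos (min_le_left m n)
    have hn : 0 < n := lt_of_lt_of_le hrpos (min_le_right m n)
    have hkm : k ≤ m := le_trans hk (min_le_left m n)
    have hkn : k ≤ n := le_trans hk (min_le_right m n)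
    subst hA
    set j0 : Fin n := ⟨0, hn⟩ with hj0
    set A := ∑ i : Fin k, σ i • Matrix.vecMulVec (u i) (v i) with hA
    set c := ∫ x in euclBall n, x j0 * x j0 with hc
    have hcpos : 0 < c := moment_pos hn j0
    set κ := ((volume (euclBall n))⁻¹).toReal * ((1 / (min m n : ℝ)) * c) with hκ
    have hκpos : 0 < κ := by
      apply mul_pos
      · apply ENNReal.toReal_pos
        · exact ENNReal.inv_ne_zero.mpr volume_euclBall_ne_top
        · exact ENNReal.inv_ne_top.mpr (ne_of_gt (volume_euclBall_pos hn))
      · apply mul_pos _ hcpos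
        apply div_pos one_pos
        apply lt_min
        · exact_mod_cast hm
        · exact_mod_cast hn
    have hobj : ∀ (U' : Matrix (Fin m) (Fin (min m n)) ℝ) (V' : Matrix (Fin n) (Fin (min m n)) ℝ),
        nestedDataObj A U' V' = κ * ∑ b : Fin (min m n), frobSq (lrProd ((b : ℕ) + 1) U' V' - A) :=
      fun U' V' => nestedDataObj_eq j0 A U' V'
    have hEY := fun (U' : Matrix (Fin m) (Fin (min m n)) ℝ)
        (V' : Matrix (Fin n) (Fin (min m n)) ℝ) (b : Fin (min m n)) =>
      EYmat hkm hkn σ hσpos hσstrict u v hu hv ((b : ℕ) + 1) (min m n) b.2 U' V'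
    constructor
    · intro hmin b
      set Us := Matrix.of (fun (i : Fin m) (t : Fin (min m n)) =>
        if h : (t : ℕ) < k then σ ⟨(t : ℕ), h⟩ * u ⟨(t : ℕ), h⟩ i else 0) with hUs
      set Vs := Matrix.of (fun (j : Fin n) (t : Fin (min m n)) =>
        if h : (t : ℕ) < k then v ⟨(t : ℕ), h⟩ j else 0) with hVs
      have hach : ∀ b' : Fin (min m n), lrProd ((b' : ℕ) + 1) Us Vs
          = ∑ i : Fin k, if (i : ℕ) < (b' : ℕ) + 1 then σ i • Matrix.vecMulVec (u i) (v i) else 0 :=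
        fun b' => achievable hk σ u v _
      have h1 := hmin Us Vs
      rw [hobj U V, hobj Us Vs] at h1
      have h2 := (mul_le_mul_iff_right₀ hκpos).mp h1
      have h3 : (∑ b' : Fin (min m n), frobSq (lrProd ((b' : ℕ) + 1) Us Vs - A))
          = ∑ b' : Fin (min m n), (∑ i : Fin k, if (b' : ℕ) + 1 ≤ (i : ℕ) then σ i ^ 2 else 0) := by
        refine Finset.sum_congr rfl fun b' _ => ?_
        rw [hach b', hA]
        exact frobSq_trunc σ u v hu hv _
      rw [h3] at h2
      have h4 : ∀ b' : Fin (min m n),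
          (∑ i : Fin k, if (b' : ℕ) + 1 ≤ (i : ℕ) then σ i ^ 2 else 0)
            ≤ frobSq (lrProd ((b' : ℕ) + 1) U V - A) := fun b' => (hEY U V b').1
      have h6 : ∀ b' : Fin (min m n), frobSq (lrProd ((b' : ℕ) + 1) U V - A)
          = ∑ i : Fin k, if (b' : ℕ) + 1 ≤ (i : ℕ) then σ i ^ 2 else 0 := by
        intro b'
        by_contra hne
        have hlt : (∑ i : Fin k, if (b' : ℕ) + 1 ≤ (i : ℕ) then σ i ^ 2 else 0)
            < frobSq (lrProd ((b' : ℕ) + 1) U V - A) := lt_of_le_of_ne (h4 b') (Ne.symm hne)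
        have hstrict := Finset.sum_lt_sum (fun i (_ : i ∈ Finset.univ) => h4 i)
          ⟨b', Finset.mem_univ b', hlt⟩
        linarith
      exact (hEY U V b).2 (h6 b)
    · intro htr U' V'
      rw [hobj U V, hobj U' V']
      apply mul_le_mul_of_nonneg_left _ (le_of_lt hκpos)
      apply Finset.sum_le_sum
      intro b _
      have h1 : frobSq (lrProd ((b : ℕ) + 1) U V - A)
          = ∑ i : Fin k, if (b : ℕ) + 1 ≤ (i : ℕ) then σ i ^ 2 else 0 := by
        rw [htr b, hA]
        exact frobSq_trunc σ u v hu hv _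
      rw [h1]
      exact (hEY U' V' b).1

end
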